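/- Suppose the stationarity equation R − Γ̂Δ + W + λK̃ = 0 holds blockwise with Δ supported on an index set S (Δ_{S^c} = 0), where Γ̂_{SS} is invertible, ‖Γ̂_{S^cS}(Γ̂_{SS})⁻¹‖_{1,∞} ≤ 1 − α/2 for some α ∈ (0, 2), ‖K̃_S‖_∞ ≤ 2, and ‖W‖_∞ + ‖R‖_∞ < αλ/4 with λ > 0. Then ‖K̃_{S^c}‖_∞ ≤ 2. -/
import Mathlib


open Matrix Finset

/-- Strict dual feasibility lemma, in block form. The stationarity equation
`R − Γ̂Δ + W + λK̃ = 0` holds with `Δ` supported on `S` (here `σ` indexes `S` and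
`τ` indexes `S^c`, with `A = Γ̂_{SS}` and `B = Γ̂_{S^cS}`). If `A` is invertible,
`‖B A⁻¹‖_{1,∞} ≤ 1 − α/2`, `‖K̃_S‖_∞ ≤ 2`, and `‖W‖_∞ + ‖R‖_∞ < αλ/4`, then
`‖K̃_{S^c}‖_∞ ≤ 2`. -/
theorem stmt_19 {σ τ : Type*} [Fintype σ] [Fintype τ] [DecidableEq σ]
    (A : Matrix σ σ ℝ) (B : Matrix τ σ ℝ)
    (Rs Ws Ks ΔS : σ → ℝ) (Rc Wc Kc : τ → ℝ)
    (α lam wbd rbd : ℝ)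
    (hα : 0 < α) (hα2 : α < 2) (hlam : 0 < lam)
    (hA : IsUnit A.det)
    (hrow : ∀ i : τ, ∑ j : σ, |(B * A⁻¹) i j| ≤ 1 - α / 2)
    (hKs : ∀ i : σ, |Ks i| ≤ 2)
    (hWs : ∀ i : σ, |Ws i| ≤ wbd) (hWc : ∀ i : τ, |Wc i| ≤ wbd)
    (hRs : ∀ i : σ, |Rs i| ≤ rbd) (hRc : ∀ i : τ, |Rc i| ≤ rbd)
    (hsmall : wbd + rbd < α * lam / 4)
    (heqS : ∀ i : σ, Rs i - A.mulVec ΔS i + Ws i + lam * Ks i = 0)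
    (heqSc : ∀ i : τ, Rc i - B.mulVec ΔS i + Wc i + lam * Kc i = 0) :
    ∀ i : τ, |Kc i| ≤ 2 := by
  intro i
  set v : σ → ℝ := fun j => Rs j + Ws j + lam * Ks j with hv
  have hAv : A.mulVec ΔS = v := by
    funext j
    have := heqS j
    simp only [hv]
    linarith
  have hB : B.mulVec ΔS i = (B * A⁻¹).mulVec v i := by
    rw [← hAv, Matrix.mulVec_mulVec, Matrix.nonsing_inv_mul_cancel_right _ _ hA]
  have hM : ∀ j : σ, |v j| ≤ rbd + wbd + 2 * lam := by
    intro j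
    have h1 := hRs j; have h2 := hWs j; have h3 := hKs j
    have : |lam * Ks j| ≤ 2 * lam := by
      rw [abs_mul, abs_of_pos hlam]
      nlinarith
    calc |v j| ≤ |Rs j| + |Ws j| + |lam * Ks j| := by
          simp only [hv]; exact (abs_add_le _ _).trans (by gcongr; exact abs_add_le _ _)
      _ ≤ rbd + wbd + 2 * lam := by linarith
  have hrbd : (0:ℝ) ≤ rbd := le_trans (abs_nonneg _) (hRc i)
  have hwbd : (0:ℝ) ≤ wbd := le_trans (abs_nonneg _) (hWc i)
  have hMpos : (0:ℝ) ≤ rbd + wbd + 2 * lam := by linarith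
  have hbound : |(B * A⁻¹).mulVec v i| ≤ (1 - α / 2) * (rbd + wbd + 2 * lam) := by
    calc |(B * A⁻¹).mulVec v i| ≤ ∑ j : σ, |(B * A⁻¹) i j * v j| := by
          exact Finset.abs_sum_le_sum_abs _ _
      _ ≤ ∑ j : σ, |(B * A⁻¹) i j| * (rbd + wbd + 2 * lam) := by
          apply Finset.sum_le_sum
          intro j _
          rw [abs_mul]
          exact mul_le_mul_of_nonneg_left (hM j) (abs_nonneg _)
      _ = (∑ j : σ, |(B * A⁻¹) i j|) * (rbd + wbd + 2 * lam) := by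
          rw [← Finset.sum_mul]
      _ ≤ (1 - α / 2) * (rbd + wbd + 2 * lam) :=
          mul_le_mul_of_nonneg_right (hrow i) hMpos
  have hKc : lam * Kc i = B.mulVec ΔS i - Rc i - Wc i := by
    have := heqSc i; linarith
  have h1 : |lam * Kc i| ≤ (1 - α / 2) * (rbd + wbd + 2 * lam) + rbd + wbd := by
    rw [hKc, hB]
    calc |(B * A⁻¹).mulVec v i - Rc i - Wc i|
        ≤ |(B * A⁻¹).mulVec v i| + |Rc i| + |Wc i| := by
          exact (abs_sub _ _).trans (by gcongr; exact abs_sub _ _)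
      _ ≤ (1 - α / 2) * (rbd + wbd + 2 * lam) + rbd + wbd := by
          have := hRc i; have := hWc i; linarith
  rw [abs_mul, abs_of_pos hlam] at h1
  have h2 : lam * |Kc i| ≤ lam * 2 := by nlinarith
  exact le_of_mul_le_mul_left h2 hlam
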